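/- If a mixed four-partite state ρ on H₁^{d₁}⊗H₂^{d₂}⊗H₃^{d₃}⊗H₄^{d₄} is separable under the bipartition fg|he (with d_f ≤ d_g and d_h ≤ d_e), then the matrix S(ρ_{fg|he}) = [[1, (T^{(he)})ᵗ],[T^{(fg)}, T^{(fghe)}]] satisfies ‖S(ρ_{fg|he})‖_tr ≤ √((5d_g²−4)(5d_e²−4))/(d_g d_e). -/

import Mathlib

open Matrix BigOperators
open scoped Kronecker ComplexOrder

/-- The positive semidefinite square root of a positive semidefinite matrix
(the definition Mathlib had as `Matrix.PosSemidef.sqrt`, since removed). -/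
noncomputable def Matrix.PosSemidef.sqrt {n : Type*} [Fintype n] [DecidableEq n] {𝕜 : Type*} [RCLike 𝕜]
    {A : Matrix n n 𝕜} (hA : A.PosSemidef) : Matrix n n 𝕜 :=
  hA.1.eigenvectorUnitary.1 * diagonal ((↑) ∘ (√·) ∘ hA.1.eigenvalues) *
  (star hA.1.eigenvectorUnitary : Matrix n n 𝕜)

/-- Trace (nuclear) norm of a real rectangular matrix: tr √(AᵀA). -/
noncomputable def traceNorm {m n : Type*} [Fintype m] [Fintype n] [DecidableEq n]
    (A : Matrix m n ℝ) : ℝ :=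
  (Matrix.posSemidef_conjTranspose_mul_self A).sqrt.trace

/-!
Write the separable state as `ρ = ∑ₗ pₗ σₗ ⊗ τₗ`. Then `S = ∑ₗ pₗ uₗ vₗᵀ` with `uₗ = (1, T(σₗ))` and
`vₗ = (1, T(τₗ))`, so convexity of the trace norm and `‖u vᵀ‖_tr ≤ ‖u‖ ‖v‖` give
`‖S‖_tr ≤ ∑ₗ pₗ ‖uₗ‖ ‖vₗ‖`. Both follow from writing `‖A‖_tr = ∑ₖ ⟨wₖ, A zₖ⟩` with the singular
vector systems `wₖ`, `zₖ` of `A` and bounding `∑ₖ ⟨wₖ, u⟩ ⟨v, zₖ⟩` by Cauchy–Schwarz and Bessel.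
Finally `‖T(σ)‖² ≤ 4 - 4 / (d_f d_g) ≤ 4 - 4 / d_g²`: this is Bessel's inequality for `σ` against
the Hilbert–Schmidt orthonormal family `𝟙 / √(d_f d_g)`, `(λᵢ ⊗ λⱼ) / 2`, together with `tr σ² ≤ 1`.
-/

-- Length at most one, so that singular vectors for the singular value `0` may be taken to be `0`.
structure Suborthonormal {κ ι : Type*} [Fintype ι] (w : κ → ι → ℝ) : Prop where
  pairwise_dotProduct_eq_zero : Pairwise fun j k => w j ⬝ᵥ w k = 0
  dotProduct_self_le_one : ∀ k, w k ⬝ᵥ w k ≤ 1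

namespace Suborthonormal

variable {κ ι : Type*} [Fintype κ] [Fintype ι] {w : κ → ι → ℝ}

theorem sum_sq_dotProduct_le (hw : Suborthonormal w) (u : ι → ℝ) :
    ∑ k, (u ⬝ᵥ w k) ^ 2 ≤ u ⬝ᵥ u := by
  set r := ∑ k, (u ⬝ᵥ w k) • w k
  have hur : u ⬝ᵥ r = ∑ k, (u ⬝ᵥ w k) ^ 2 := by
    simp only [r, dotProduct_sum, dotProduct_smul, smul_eq_mul, sq]
  have hrr : r ⬝ᵥ r ≤ ∑ k, (u ⬝ᵥ w k) ^ 2 :=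
    calc r ⬝ᵥ r = ∑ k, (u ⬝ᵥ w k) ^ 2 * (w k ⬝ᵥ w k) := by
          simp only [r, sum_dotProduct, dotProduct_sum, smul_dotProduct, dotProduct_smul,
            smul_eq_mul]
          refine Finset.sum_congr rfl fun j _ => ?_
          rw [Finset.sum_eq_single j (fun k _ hkj => by
            rw [hw.pairwise_dotProduct_eq_zero hkj, mul_zero]) (by simp)]
          ring
      _ ≤ ∑ k, (u ⬝ᵥ w k) ^ 2 :=
          Finset.sum_le_sum fun k _ => mul_le_of_le_one_right (sq_nonneg _) (hw.2 k)
  have hnonneg : 0 ≤ (u - r) ⬝ᵥ (u - r) := by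
    simpa only [star_trivial] using dotProduct_star_self_nonneg (u - r)
  simp only [sub_dotProduct, dotProduct_sub, dotProduct_comm r u, hur] at hnonneg
  linarith

theorem sum_dotProduct_vecMulVec_mulVec_le {m n : Type*} [Fintype m] [Fintype n]
    {w : κ → m → ℝ} {z : κ → n → ℝ} (hw : Suborthonormal w) (hz : Suborthonormal z)
    (u : m → ℝ) (v : n → ℝ) :
    ∑ k, w k ⬝ᵥ (vecMulVec u v *ᵥ z k) ≤ √(u ⬝ᵥ u) * √(v ⬝ᵥ v) :=
  calc ∑ k, w k ⬝ᵥ (vecMulVec u v *ᵥ z k) = ∑ k, (u ⬝ᵥ w k) * (v ⬝ᵥ z k) := by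
        refine Finset.sum_congr rfl fun k _ => ?_
        rw [dotProduct_mulVec, vecMul_vecMulVec, smul_dotProduct, smul_eq_mul,
          dotProduct_comm (w k) u]
    _ ≤ √(∑ k, (u ⬝ᵥ w k) ^ 2) * √(∑ k, (v ⬝ᵥ z k) ^ 2) :=
        Real.sum_mul_le_sqrt_mul_sqrt _ _ _
    _ ≤ √(u ⬝ᵥ u) * √(v ⬝ᵥ v) := by
        gcongr
        exacts [hw.sum_sq_dotProduct_le u, hz.sum_sq_dotProduct_le v]

end Suborthonormal

theorem inv_sqrt_mul_inv_sqrt_mul_le_one (x : ℝ) : (√x)⁻¹ * ((√x)⁻¹ * x) ≤ 1 := by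
  rw [← div_eq_inv_mul x, Real.div_sqrt]
  exact inv_mul_le_one

theorem Matrix.trace_conjStarAlgAut {n 𝕜 : Type*} [Fintype n] [DecidableEq n] [RCLike 𝕜]
    (U : unitaryGroup n 𝕜) (M : Matrix n n 𝕜) :
    (Unitary.conjStarAlgAut 𝕜 _ U M).trace = M.trace := by
  rw [Unitary.conjStarAlgAut_apply, trace_mul_cycle, Unitary.coe_star_mul_self, one_mul]

theorem Matrix.PosSemidef.trace_sqrt {n 𝕜 : Type*} [Fintype n] [DecidableEq n] [RCLike 𝕜]
    {A : Matrix n n 𝕜} (hA : A.PosSemidef) :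
    hA.sqrt.trace = ∑ k, (√(hA.1.eigenvalues k) : 𝕜) := by
  rw [PosSemidef.sqrt, trace_mul_cycle, Unitary.coe_star_mul_self, one_mul, trace_diagonal]
  rfl

theorem Matrix.PosSemidef.re_trace_mul_self_le {n 𝕜 : Type*} [Fintype n] [DecidableEq n]
    [RCLike 𝕜] {A : Matrix n n 𝕜} (hA : A.PosSemidef) :
    RCLike.re (A * A).trace ≤ RCLike.re A.trace ^ 2 := by
  have hsq : (A * A).trace = ∑ k, ((hA.1.eigenvalues k ^ 2 : ℝ) : 𝕜) := by
    conv_lhs => rw [hA.1.spectral_theorem]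
    rw [← map_mul, trace_conjStarAlgAut, diagonal_mul_diagonal, trace_diagonal]
    simp [sq]
  rw [hsq, hA.1.trace_eq_sum_eigenvalues, ← RCLike.ofReal_sum, ← RCLike.ofReal_sum,
    RCLike.ofReal_re, RCLike.ofReal_re]
  exact Finset.sum_sq_le_sq_sum_of_nonneg fun k _ => hA.eigenvalues_nonneg k

section TraceNorm

variable {m n : Type*} [Fintype m] [Fintype n] [DecidableEq n]

theorem exists_suborthonormal_traceNorm_eq (A : Matrix m n ℝ) :
    ∃ (w : n → m → ℝ) (z : n → n → ℝ), Suborthonormal w ∧ Suborthonormal z ∧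
      traceNorm A = ∑ k, w k ⬝ᵥ (A *ᵥ z k) := by
  set hG := (posSemidef_conjTranspose_mul_self A).1
  set d := hG.eigenvalues
  set z : n → n → ℝ := fun k => ⇑(hG.eigenvectorBasis k)
  have hz : ∀ j k, z j ⬝ᵥ z k = if j = k then 1 else 0 := by
    intro j k
    have := orthonormal_iff_ite.mp hG.eigenvectorBasis.orthonormal k j
    simpa [EuclideanSpace.inner_eq_star_dotProduct, @eq_comm _ k j, z] using this
  have hGz : ∀ k, (Aᴴ * A) *ᵥ z k = d k • z k := hG.mulVec_eigenvectorBasis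
  have hAz : ∀ j k, (A *ᵥ z j) ⬝ᵥ (A *ᵥ z k) = if j = k then d k else 0 := by
    intro j k
    rw [← vecMul_transpose, ← dotProduct_mulVec, mulVec_mulVec,
      ← conjTranspose_eq_transpose_of_trivial, hGz, dotProduct_smul, hz, smul_eq_mul, mul_ite,
      mul_one, mul_zero]
  refine ⟨fun k => (√(d k))⁻¹ • (A *ᵥ z k), z, ⟨?_, ?_⟩, ⟨?_, ?_⟩, ?_⟩
  · intro j k hjk
    simp [smul_dotProduct, dotProduct_smul, hAz, hjk]
  · intro k
    simpa only [smul_dotProduct, dotProduct_smul, hAz, if_true, smul_eq_mul]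
      using inv_sqrt_mul_inv_sqrt_mul_le_one (d k)
  · intro j k hjk
    simp [hz, hjk]
  · intro k
    simp [hz]
  · rw [traceNorm, PosSemidef.trace_sqrt]
    refine Finset.sum_congr rfl fun k _ => ?_
    rw [smul_dotProduct, hAz, if_pos rfl, smul_eq_mul, ← div_eq_inv_mul, Real.div_sqrt]
    rfl

theorem traceNorm_sum_smul_vecMulVec_le {ι : Type*} [Fintype ι] (c : ι → ℝ) (hc : ∀ l, 0 ≤ c l)
    (u : ι → m → ℝ) (v : ι → n → ℝ) :
    traceNorm (∑ l, c l • vecMulVec (u l) (v l)) ≤ ∑ l, c l * (√(u l ⬝ᵥ u l) * √(v l ⬝ᵥ v l)) := by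
  obtain ⟨w, z, hw, hz, htr⟩ :=
    exists_suborthonormal_traceNorm_eq (∑ l, c l • vecMulVec (u l) (v l))
  calc traceNorm (∑ l, c l • vecMulVec (u l) (v l))
      = ∑ l, c l * ∑ k, w k ⬝ᵥ (vecMulVec (u l) (v l) *ᵥ z k) := by
        simp only [htr, sum_mulVec, smul_mulVec, dotProduct_sum, dotProduct_smul,
          smul_eq_mul, Finset.mul_sum]
        exact Finset.sum_comm
    _ ≤ ∑ l, c l * (√(u l ⬝ᵥ u l) * √(v l ⬝ᵥ v l)) := by
        gcongr with l
        · exact hc l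
        · exact hw.sum_dotProduct_vecMulVec_mulVec_le hz (u l) (v l)

end TraceNorm

noncomputable def Matrix.realCoords {m n : Type*} (M : Matrix m n ℂ) : (m × n) × Bool → ℝ :=
  fun x => if x.2 then (M x.1.1 x.1.2).im else (M x.1.1 x.1.2).re

theorem Matrix.realCoords_dotProduct {m n : Type*} [Fintype m] [Fintype n] (A B : Matrix m n ℂ) :
    A.realCoords ⬝ᵥ B.realCoords = (Aᴴ * B).trace.re := by
  simp only [dotProduct, Fintype.sum_prod_type, Fintype.sum_bool, realCoords, if_true,
    Bool.false_eq_true, if_false, trace, diag_apply, mul_apply, conjTranspose_apply,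
    Complex.re_sum, Complex.mul_re, Complex.star_def, Complex.conj_re, Complex.conj_im]
  rw [Finset.sum_comm]
  refine Finset.sum_congr rfl fun j _ => Finset.sum_congr rfl fun i _ => ?_
  ring

theorem Matrix.IsHermitian.kronecker {m n R : Type*} [CommSemiring R] [StarRing R]
    {A : Matrix m m R} {B : Matrix n n R} (hA : A.IsHermitian) (hB : B.IsHermitian) :
    (A ⊗ₖ B).IsHermitian := by
  rw [IsHermitian, conjTranspose_kronecker, hA.eq, hB.eq]

theorem Matrix.IsHermitian.im_trace_mul_eq_zero {n : Type*} [Fintype n] {A B : Matrix n n ℂ}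
    (hA : A.IsHermitian) (hB : B.IsHermitian) : (A * B).trace.im = 0 := by
  rw [← Complex.conj_eq_iff_im, ← Complex.star_def, ← trace_conjTranspose, conjTranspose_mul,
    hA.eq, hB.eq, trace_mul_comm]

theorem sum_sq_re_trace_mul_le {N ι : Type*} [Fintype N] [DecidableEq N] [Fintype ι]
    [DecidableEq ι]
    (Γ : ι → Matrix N N ℂ) {c : ℝ} (hc : 0 < c) (hΓ : ∀ i, (Γ i).IsHermitian)
    (hΓtr : ∀ i, (Γ i).trace = 0)
    (hΓorth : ∀ i j, (Γ i * Γ j).trace = if i = j then (c : ℂ) else 0)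
    {σ : Matrix N N ℂ} (hσ : σ.PosSemidef) (hσtr : σ.trace = 1) :
    ∑ i, (σ * Γ i).trace.re ^ 2 ≤ c * (1 - 1 / Fintype.card N) := by
  set D : ℝ := (Fintype.card N : ℝ)
  set w : Option ι → (N × N) × Bool → ℝ := fun o =>
    o.elim ((√D)⁻¹ • (1 : Matrix N N ℂ).realCoords) fun i => (√c)⁻¹ • (Γ i).realCoords
  have hw : Suborthonormal w := by
    constructor
    · rintro (_ | i) (_ | j) hij
      · exact absurd rfl hij
      · simp [w, realCoords_dotProduct, hΓtr]
      · simp [w, realCoords_dotProduct, (hΓ i).eq, hΓtr]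
      · simp [w, realCoords_dotProduct, (hΓ i).eq, hΓorth, Option.some_injective _ |>.ne_iff.mp hij]
    · rintro (_ | i)
      · simpa [w, realCoords_dotProduct, D] using inv_sqrt_mul_inv_sqrt_mul_le_one D
      · simpa [w, realCoords_dotProduct, (hΓ i).eq, hΓorth] using inv_sqrt_mul_inv_sqrt_mul_le_one c
  have hbessel := hw.sum_sq_dotProduct_le σ.realCoords
  simp only [Fintype.sum_option, Option.elim_none, Option.elim_some, w, dotProduct_smul,
    realCoords_dotProduct, hσ.1.eq, mul_one, hσtr, Complex.one_re, smul_eq_mul, inv_pow] at hbessel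
  have hpurity : (σ * σ).trace.re ≤ 1 := by
    simpa [hσtr] using hσ.re_trace_mul_self_le
  simp_rw [Real.sq_sqrt (show (0 : ℝ) ≤ D from Nat.cast_nonneg _), mul_pow, inv_pow,
    Real.sq_sqrt hc.le, ← Finset.mul_sum] at hbessel
  rw [← inv_mul_le_iff₀ hc, one_div]
  linarith

theorem re_trace_sum_smul_kronecker_mul_kronecker {na nb ι : Type*} [Fintype na] [Fintype nb]
    [Fintype ι] (p : ι → ℝ)
    {σ : ι → Matrix na na ℂ} (τ : ι → Matrix nb nb ℂ) (hσ : ∀ l, (σ l).IsHermitian)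
    {X : Matrix na na ℂ} (hX : X.IsHermitian) (Y : Matrix nb nb ℂ) :
    ((∑ l, (p l : ℂ) • (σ l ⊗ₖ τ l)) * (X ⊗ₖ Y)).trace.re =
      ∑ l, p l * ((σ l * X).trace.re * (τ l * Y).trace.re) := by
  rw [Matrix.sum_mul, trace_sum, Complex.re_sum]
  refine Finset.sum_congr rfl fun l _ => ?_
  rw [smul_mul, trace_smul, ← mul_kronecker_mul, trace_kronecker, smul_eq_mul,
    Complex.re_ofReal_mul, Complex.mul_re, (hσ l).im_trace_mul_eq_zero hX, zero_mul, sub_zero]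

section Correlations

variable {na nb ιa ιb : Type*} [Fintype na] [Fintype nb]

-- The vector `(1, T(σ))` of the paper.
noncomputable def correlationVector (σ : Matrix (na × nb) (na × nb) ℂ)
    (ga : ιa → Matrix na na ℂ) (gb : ιb → Matrix nb nb ℂ) : Option (ιa × ιb) → ℝ
  | none => 1
  | some (i, j) => (σ * (ga i ⊗ₖ gb j)).trace.re

theorem sqrt_correlationVector_dotProduct_self_le [DecidableEq na] [DecidableEq nb] [Fintype ιa]
    [DecidableEq ιa] [Fintype ιb] [DecidableEq ιb] (ga : ιa → Matrix na na ℂ)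
    (gb : ιb → Matrix nb nb ℂ) (hga : ∀ i, (ga i).IsHermitian) (hga_tr : ∀ i, (ga i).trace = 0)
    (hga_orth : ∀ i j, (ga i * ga j).trace = if i = j then 2 else 0)
    (hgb : ∀ i, (gb i).IsHermitian)
    (hgb_orth : ∀ i j, (gb i * gb j).trace = if i = j then 2 else 0)
    (hcard : Fintype.card na ≤ Fintype.card nb)
    {σ : Matrix (na × nb) (na × nb) ℂ} (hσ : σ.PosSemidef) (hσtr : σ.trace = 1) :
    √(correlationVector σ ga gb ⬝ᵥ correlationVector σ ga gb) ≤
      √(5 * (Fintype.card nb : ℝ) ^ 2 - 4) / Fintype.card nb := by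
  obtain ⟨⟨x, y⟩⟩ : Nonempty (na × nb) := by
    by_contra h
    have := not_nonempty_iff.mp h
    simp [trace] at hσtr
  have hbloch := sum_sq_re_trace_mul_le (fun ij : ιa × ιb => ga ij.1 ⊗ₖ gb ij.2) four_pos
    (fun ij => (hga ij.1).kronecker (hgb ij.2))
    (fun ij => by rw [trace_kronecker, hga_tr, zero_mul])
    (fun ij kl => by
      simp only [← mul_kronecker_mul, trace_kronecker, hga_orth, hgb_orth, ite_zero_mul_ite_zero,
        ← Prod.ext_iff]
      norm_num)
    hσ hσtr
  have hsum : correlationVector σ ga gb ⬝ᵥ correlationVector σ ga gb =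
      1 + ∑ ij : ιa × ιb, (σ * (ga ij.1 ⊗ₖ gb ij.2)).trace.re ^ 2 := by
    simp [dotProduct, Fintype.sum_option, correlationVector, sq]
  set a : ℝ := (Fintype.card na : ℝ)
  set b : ℝ := (Fintype.card nb : ℝ)
  have ha : 0 < a := by simpa [a] using Fintype.card_pos_iff.mpr ⟨x⟩
  have hab : a ≤ b := by simpa [a, b] using hcard
  have hD : (Fintype.card (na × nb) : ℝ) = a * b := by simp [a, b, Fintype.card_prod]
  rw [hD] at hbloch
  have hb : 0 < b := ha.trans_le hab
  have hinv : 1 / (b * b) ≤ 1 / (a * b) := one_div_le_one_div_of_le (by positivity) (by nlinarith)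
  have h5 : (5 * b ^ 2 - 4) / b ^ 2 = 5 - 4 * (1 / (b * b)) := by field_simp
  rw [show √(5 * b ^ 2 - 4) / b = √((5 * b ^ 2 - 4) / b ^ 2) by
    rw [Real.sqrt_div' _ (sq_nonneg b), Real.sqrt_sq hb.le]]
  refine Real.sqrt_le_sqrt ?_
  rw [hsum, h5]
  linarith

variable {nc nd ιc ιd : Type*} [Fintype nc] [Fintype nd] [DecidableEq na] [DecidableEq nb]
  [DecidableEq nc] [DecidableEq nd]

-- The matrix `S(ρ) = [[1, T^{(he)}ᵗ], [T^{(fg)}, T^{(fghe)}]]` of the paper.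
noncomputable def correlationMatrix (ρ : Matrix ((na × nb) × nc × nd) ((na × nb) × nc × nd) ℂ)
    (ga : ιa → Matrix na na ℂ) (gb : ιb → Matrix nb nb ℂ) (gc : ιc → Matrix nc nc ℂ)
    (gd : ιd → Matrix nd nd ℂ) : Matrix (Option (ιa × ιb)) (Option (ιc × ιd)) ℝ :=
  Matrix.of fun i j =>
    match i, j with
    | none, none => 1
    | none, some (k, m) => (ρ * ((1 ⊗ₖ 1) ⊗ₖ (gc k ⊗ₖ gd m))).trace.re
    | some (i, j), none => (ρ * ((ga i ⊗ₖ gb j) ⊗ₖ (1 ⊗ₖ 1))).trace.re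
    | some (i, j), some (k, m) => (ρ * ((ga i ⊗ₖ gb j) ⊗ₖ (gc k ⊗ₖ gd m))).trace.re

theorem correlationMatrix_sum_smul_kronecker {ι : Type*} [Fintype ι] (p : ι → ℝ)
    (hp : ∑ l, p l = 1) {σ : ι → Matrix (na × nb) (na × nb) ℂ}
    {τ : ι → Matrix (nc × nd) (nc × nd) ℂ} (hσ : ∀ l, (σ l).IsHermitian)
    (hσtr : ∀ l, (σ l).trace = 1) (hτtr : ∀ l, (τ l).trace = 1)
    {ga : ιa → Matrix na na ℂ} {gb : ιb → Matrix nb nb ℂ} (gc : ιc → Matrix nc nc ℂ)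
    (gd : ιd → Matrix nd nd ℂ) (hga : ∀ i, (ga i).IsHermitian) (hgb : ∀ i, (gb i).IsHermitian) :
    correlationMatrix (∑ l, (p l : ℂ) • (σ l ⊗ₖ τ l)) ga gb gc gd =
      ∑ l, p l • vecMulVec (correlationVector (σ l) ga gb) (correlationVector (τ l) gc gd) := by
  ext (_ | ⟨i, j⟩) (_ | ⟨k, m⟩) <;>
    simp only [correlationMatrix, of_apply, Matrix.sum_apply, Matrix.smul_apply,
      vecMulVec_apply, smul_eq_mul, correlationVector]
  · simp [hp]
  · rw [re_trace_sum_smul_kronecker_mul_kronecker _ _ hσ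
      (isHermitian_one.kronecker isHermitian_one)]
    simp [hσtr]
  · rw [re_trace_sum_smul_kronecker_mul_kronecker _ _ hσ ((hga i).kronecker (hgb j))]
    simp [hτtr]
  · rw [re_trace_sum_smul_kronecker_mul_kronecker _ _ hσ ((hga i).kronecker (hgb j))]

end Correlations

theorem sep_fg_he_trace_norm_bound
    (df dg dh de : ℕ) (hfg : df ≤ dg) (hhe : dh ≤ de)
    (lamf : Fin (df ^ 2 - 1) → Matrix (Fin df) (Fin df) ℂ)
    (lamg : Fin (dg ^ 2 - 1) → Matrix (Fin dg) (Fin dg) ℂ)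
    (lamh : Fin (dh ^ 2 - 1) → Matrix (Fin dh) (Fin dh) ℂ)
    (lame : Fin (de ^ 2 - 1) → Matrix (Fin de) (Fin de) ℂ)
    (hfherm : ∀ i, (lamf i).IsHermitian) (hftr : ∀ i, (lamf i).trace = 0)
    (hforth : ∀ i j, (lamf i * lamf j).trace = if i = j then 2 else 0)
    (hgherm : ∀ i, (lamg i).IsHermitian)
    (hgorth : ∀ i j, (lamg i * lamg j).trace = if i = j then 2 else 0)
    (hhherm : ∀ i, (lamh i).IsHermitian) (hhtr : ∀ i, (lamh i).trace = 0)
    (hhorth : ∀ i j, (lamh i * lamh j).trace = if i = j then 2 else 0)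
    (heherm : ∀ i, (lame i).IsHermitian)
    (heorth : ∀ i j, (lame i * lame j).trace = if i = j then 2 else 0)
    (ρ : Matrix ((Fin df × Fin dg) × Fin dh × Fin de) ((Fin df × Fin dg) × Fin dh × Fin de) ℂ)
    (L : ℕ) (p : Fin L → ℝ) (hp : ∀ l, 0 < p l) (hpsum : ∑ l, p l = 1)
    (σfg : Fin L → Matrix (Fin df × Fin dg) (Fin df × Fin dg) ℂ)
    (hσfg : ∀ l, (σfg l).PosSemidef ∧ (σfg l).trace = 1)
    (σhe : Fin L → Matrix (Fin dh × Fin de) (Fin dh × Fin de) ℂ)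
    (hσhe : ∀ l, (σhe l).PosSemidef ∧ (σhe l).trace = 1)
    (hsep : ρ = ∑ l, (p l : ℂ) • (σfg l ⊗ₖ σhe l)) :
    traceNorm (Matrix.of fun (i : Option (Fin (df ^ 2 - 1) × Fin (dg ^ 2 - 1)))
        (j : Option (Fin (dh ^ 2 - 1) × Fin (de ^ 2 - 1))) =>
      match i, j with
      | none, none => (1 : ℝ)
      | none, some (k, m) =>
          Complex.re ((ρ * (((1 : Matrix (Fin df) (Fin df) ℂ) ⊗ₖ (1 : Matrix (Fin dg) (Fin dg) ℂ)) ⊗ₖ (lamh k ⊗ₖ lame m))).trace)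
      | some (i, j), none =>
          Complex.re ((ρ * ((lamf i ⊗ₖ lamg j) ⊗ₖ ((1 : Matrix (Fin dh) (Fin dh) ℂ) ⊗ₖ (1 : Matrix (Fin de) (Fin de) ℂ)))).trace)
      | some (i, j), some (k, m) =>
          Complex.re ((ρ * ((lamf i ⊗ₖ lamg j) ⊗ₖ (lamh k ⊗ₖ lame m))).trace))
      ≤ Real.sqrt ((5 * (dg : ℝ) ^ 2 - 4) * (5 * (de : ℝ) ^ 2 - 4)) / ((dg : ℝ) * (de : ℝ)) := by
  set u := fun l => correlationVector (σfg l) lamf lamg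
  set v := fun l => correlationVector (σhe l) lamh lame
  have hu : ∀ l, √(u l ⬝ᵥ u l) ≤ √(5 * (dg : ℝ) ^ 2 - 4) / dg := fun l => by
    simpa using sqrt_correlationVector_dotProduct_self_le lamf lamg hfherm hftr hforth hgherm
      hgorth (by simpa using hfg) (hσfg l).1 (hσfg l).2
  have hv : ∀ l, √(v l ⬝ᵥ v l) ≤ √(5 * (de : ℝ) ^ 2 - 4) / de := fun l => by
    simpa using sqrt_correlationVector_dotProduct_self_le lamh lame hhherm hhtr hhorth heherm
      heorth (by simpa using hhe) (hσhe l).1 (hσhe l).2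
  calc _ = traceNorm (correlationMatrix ρ lamf lamg lamh lame) := by
        congr 1
        ext (_ | ⟨i, j⟩) (_ | ⟨k, m⟩) <;> rfl
    _ = traceNorm (∑ l, p l • vecMulVec (u l) (v l)) := by
        rw [hsep, correlationMatrix_sum_smul_kronecker p hpsum (fun l => (hσfg l).1.1)
          (fun l => (hσfg l).2) (fun l => (hσhe l).2) lamh lame hfherm hgherm]
    _ ≤ ∑ l, p l * (√(u l ⬝ᵥ u l) * √(v l ⬝ᵥ v l)) :=
        traceNorm_sum_smul_vecMulVec_le p (fun l => (hp l).le) u v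
    _ ≤ ∑ l, p l * (√(5 * (dg : ℝ) ^ 2 - 4) / dg * (√(5 * (de : ℝ) ^ 2 - 4) / de)) := by
        gcongr with l
        exacts [(hp l).le, hu l, hv l]
    _ = √((5 * (dg : ℝ) ^ 2 - 4) * (5 * (de : ℝ) ^ 2 - 4)) / (dg * de) := by
        rw [← Finset.sum_mul, hpsum, one_mul, div_mul_div_comm]
        rcases Nat.eq_zero_or_pos dg with hdg | hdg
        · simp [hdg] -- both sides are the junk value `x / 0 = 0`
        · rw [Real.sqrt_mul (by nlinarith [(Nat.one_le_cast (α := ℝ)).mpr hdg])]
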